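/- Assume in addition that C is braided monoidal, and suppose there exists a set E of objects of C such that every object of C is isomorphic to a tensor product e_{i_1} ⊗ ⋯ ⊗ e_{i_k} of finitely many objects of E (the empty product being the unit 𝟙). Then for every n ≥ 0 and every F in Fct(C, A), F belongs to VPol_n if and only if for every object e of E one has κ_e(F) = 0 and δ_e(F) ∈ VPol_{n−1}. -/

import Mathlib

open CategoryTheory CategoryTheory.Limits CategoryTheory.MonoidalCategory

variable {C : Type*} [Category C] [MonoidalCategory C]
variable {A : Type*} [Category A] [Abelian A]

/-- The translation endofunctor `τ_x` of `Fct(C, A)`: precomposition with `x ⊗ -`. -/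
noncomputable def tauF (A : Type*) [Category A] (x : C) : (C ⥤ A) ⥤ (C ⥤ A) :=
  (Functor.whiskeringLeft C C A).obj (tensorLeft x)

/-- The component `i_x(F) : F ⟶ τ_x F`, whose component at `c` is
`F` applied to `c ≅ 𝟙 ⊗ c ⟶ x ⊗ c`. -/
def iApp (hI : IsInitial (𝟙_ C)) (x : C) (F : C ⥤ A) : F ⟶ tensorLeft x ⋙ F where
  app c := F.map ((λ_ c).inv ≫ hI.to x ▷ c)
  naturality c c' f := by
    dsimp
    rw [← F.map_comp, ← F.map_comp]
    congr 1
    rw [leftUnitor_inv_naturality_assoc, whisker_exchange, Category.assoc]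

/-- The natural transformation `i_x : Id ⟶ τ_x` of endofunctors of `Fct(C, A)`. -/
noncomputable def iNT (hI : IsInitial (𝟙_ C)) (x : C) :
    𝟭 (C ⥤ A) ⟶ tauF A x where
  app F := iApp hI x F
  naturality F G η := by
    ext c
    exact (η.naturality _).symm

/-- The evanescence endofunctor `κ_x = ker(i_x)` of `Fct(C, A)`. -/
noncomputable def kappaF (hI : IsInitial (𝟙_ C)) (x : C) : (C ⥤ A) ⥤ (C ⥤ A) :=
  kernel (iNT (A := A) hI x)

/-- The difference endofunctor `δ_x = coker(i_x)` of `Fct(C, A)`. -/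
noncomputable def deltaF (hI : IsInitial (𝟙_ C)) (x : C) : (C ⥤ A) ⥤ (C ⥤ A) :=
  cokernel (iNT (A := A) hI x)

/-- `VPolAux hI (n+1) F` says that `F` is very strong polynomial of degree `≤ n`;
`VPolAux hI 0 F` says that `F` is the zero functor (degree `≤ -1`). -/
def VPolAux (hI : IsInitial (𝟙_ C)) : ℕ → (C ⥤ A) → Prop
  | 0 => fun F => IsZero F
  | n + 1 => fun F => ∀ x : C,
      IsZero ((kappaF hI x).obj F) ∧ VPolAux hI n ((deltaF hI x).obj F)

/-- `VPol hI n F` : `F` is very strong polynomial of degree `≤ n`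
(with `VPol_m = {0}` for `m < 0`). -/
def VPol (hI : IsInitial (𝟙_ C)) (n : ℤ) (F : C ⥤ A) : Prop :=
  VPolAux hI (n + 1).toNat F

/-- The iterated tensor product of a list of objects (empty product is the unit). -/
def tensorList : List C → C
  | [] => 𝟙_ C
  | x :: l => x ⊗ tensorList l

/-!
Write `VPolAt n x F` when `i_x(F)` is a monomorphism whose cokernel lies in `VPol_{n-1}`, so that
`F ∈ VPol_n` iff `VPolAt n x F` for every `x`. It holds for `x = 𝟙` and depends only on the
isomorphism class of `x`. Up to the associator, `i_{x ⊗ y}(F)` is `i_x(F)` followed by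
`i_y(τ_x F)`, and the cokernel of a composite of monomorphisms is an extension of the two
cokernels; since `VPol_{n-1}` is closed under extensions (the snake lemma applied to `i_x` on a
short exact sequence), `VPolAt n x F` and `VPolAt n y (τ_x F)` give `VPolAt n (x ⊗ y) F`.
The braiding identifies `i_x(τ_z F)` with `τ_z(i_x F)`, so `VPolAt n x F` passes to `τ_z F`, and
an induction on the length of a word in `E` concludes.
-/

namespace CategoryTheory.ShortComplex

variable {𝒜 : Type*} [Category 𝒜] [Abelian 𝒜]

noncomputable def snakeInputOfHom {S₁ S₂ : ShortComplex 𝒜} (φ : S₁ ⟶ S₂) (h₁ : S₁.ShortExact)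
    (h₂ : S₂.ShortExact) : SnakeInput 𝒜 where
  L₀ := kernel φ
  L₁ := S₁
  L₂ := S₂
  L₃ := cokernel φ
  v₀₁ := kernel.ι φ
  v₁₂ := φ
  v₂₃ := cokernel.π φ
  h₀ := kernelIsKernel φ
  h₃ := cokernelIsCokernel φ
  L₁_exact := h₁.exact
  epi_L₁_g := h₁.epi_g
  L₂_exact := h₂.exact
  mono_L₂_f := h₂.mono_f

lemma SnakeInput.shortExact_L₃ (D : SnakeInput 𝒜) [Epi D.L₂.g] [Mono D.v₁₂.τ₃] :
    D.L₃.ShortExact := by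
  -- the connecting map starts at `L₀.X₃ = ker v₁₂.τ₃ = 0`
  have hK : IsZero D.L₀.X₃ :=
    IsZero.of_mono_eq_zero D.v₀₁.τ₃ ((cancel_mono D.v₁₂.τ₃).1 (by simp))
  exact .mk' D.L₃_exact (D.L₂'_exact.mono_g (hK.eq_of_src _ _)) inferInstance

lemma shortExact_cokernel_of_mono_τ₃ {S₁ S₂ : ShortComplex 𝒜} (φ : S₁ ⟶ S₂)
    (h₁ : S₁.ShortExact) (h₂ : S₂.ShortExact) [Mono φ.τ₃] : (cokernel φ).ShortExact := by
  have : Epi (snakeInputOfHom φ h₁ h₂).L₂.g := h₂.epi_g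
  have : Mono (snakeInputOfHom φ h₁ h₂).v₁₂.τ₃ := ‹Mono φ.τ₃›
  exact (snakeInputOfHom φ h₁ h₂).shortExact_L₃

lemma shortExact_cokernel_comp {X Y Z : 𝒜} (f : X ⟶ Y) (g : Y ⟶ Z) [Mono g] :
    (ShortComplex.mk (cokernel.map f (f ≫ g) (𝟙 _) g (by simp))
      (cokernel.map (f ≫ g) g f (𝟙 _) (by simp)) (by ext; simp)).ShortExact := by
  have hE := kernelCokernelCompSequence_exact f g
  have := (hE.exact 2).mono_g ((isZero_kernel_of_mono g).eq_of_src _ _)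
  exact .mk' (hE.exact 3) this (inferInstanceAs (Epi ((kernelCokernelCompSequence f g).map' 4 5)))

end CategoryTheory.ShortComplex

section Translation

variable (hI : IsInitial (𝟙_ C))

omit [Abelian A] in
lemma iApp_comp_isoWhiskerRight_mapIso {x y : C} (e : x ≅ y) (F : C ⥤ A) :
    iApp hI x F ≫ (Functor.isoWhiskerRight ((tensoringLeft C).mapIso e) F).hom = iApp hI y F := by
  ext c
  dsimp [iApp]
  rw [← F.map_comp, Category.assoc, ← comp_whiskerRight, hI.hom_ext (hI.to x ≫ e.hom) (hI.to y)]

omit [Abelian A] in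
lemma iApp_tensorObj (x y : C) (F : C ⥤ A) :
    iApp hI (x ⊗ y) F = iApp hI x F ≫ iApp hI y (tensorLeft x ⋙ F) ≫
      (Functor.isoWhiskerRight (tensorLeftTensor x y) F).inv := by
  ext c
  dsimp [iApp]
  rw [← F.map_comp, ← F.map_comp, tensorLeftTensor_inv_app, MonoidalCategory.whiskerLeft_comp]
  simp only [Category.assoc, associator_inv_naturality_middle, triangle_assoc_comp_left_inv_assoc]
  rw [← comp_whiskerRight_assoc, ← comp_whiskerRight, hI.hom_ext (hI.to (x ⊗ y))]

omit [Abelian A] in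
instance isIso_iApp_unit (F : C ⥤ A) : IsIso (iApp hI (𝟙_ C) F) := by
  have : ∀ c : C, IsIso ((iApp hI (𝟙_ C) F).app c) := fun c => by
    dsimp [iApp]
    rw [hI.hom_ext (hI.to (𝟙_ C)) (𝟙 _), id_whiskerRight, Category.comp_id]
    infer_instance
  exact NatIso.isIso_of_isIso_app _

variable [BraidedCategory C]

noncomputable def tensorLeftCommIso (x z : C) :
    tensorLeft x ⋙ tensorLeft z ≅ tensorLeft z ⋙ tensorLeft x :=
  (tensorLeftTensor z x).symm ≪≫ (tensoringLeft C).mapIso (β_ z x) ≪≫ tensorLeftTensor x z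

omit [Abelian A] in
lemma iApp_tensorLeft_comp (z x : C) (F : C ⥤ A) :
    iApp hI x (tensorLeft z ⋙ F) ≫ (Functor.isoWhiskerRight (tensorLeftCommIso x z) F).hom =
      Functor.whiskerLeft (tensorLeft z) (iApp hI x F) := by
  ext c
  dsimp [iApp, tensorLeftCommIso]
  rw [← F.map_comp]
  congr 1
  have hβ : ((ρ_ z).inv ≫ z ◁ hI.to x) ≫ (β_ z x).hom = (λ_ z).inv ≫ hI.to x ▷ z := by
    rw [Category.assoc, BraidedCategory.braiding_naturality_right, rightUnitor_inv_braiding_assoc]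
  rw [tensorLeftTensor_inv_app, MonoidalCategory.whiskerLeft_comp]
  simp only [Category.assoc]
  rw [associator_inv_naturality_middle_assoc, triangle_assoc_comp_left_inv_assoc,
    ← comp_whiskerRight_assoc, ← comp_whiskerRight_assoc, hβ, comp_whiskerRight_assoc,
    associator_naturality_left, leftUnitor_inv_whiskerRight_assoc, Iso.inv_hom_id_assoc]

end Translation

section VeryStrongPolynomial

variable (hI : IsInitial (𝟙_ C))

noncomputable def kappaFObjIso (x : C) (F : C ⥤ A) :
    (kappaF hI x).obj F ≅ kernel (iApp hI x F) :=
  PreservesKernel.iso ((evaluation (C ⥤ A) (C ⥤ A)).obj F) (iNT hI x)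

noncomputable def deltaFObjIso (x : C) (F : C ⥤ A) :
    (deltaF hI x).obj F ≅ cokernel (iApp hI x F) :=
  PreservesCokernel.iso ((evaluation (C ⥤ A) (C ⥤ A)).obj F) (iNT hI x)

def VPolAt (n : ℕ) (x : C) (F : C ⥤ A) : Prop :=
  Mono (iApp hI x F) ∧ VPolAux hI n (cokernel (iApp hI x F))

def iShortComplexHom (x : C) (S : ShortComplex (C ⥤ A)) :
    S ⟶ S.map ((Functor.whiskeringLeft C C A).obj (tensorLeft x)) where
  τ₁ := iApp hI x S.X₁
  τ₂ := iApp hI x S.X₂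
  τ₃ := iApp hI x S.X₃
  comm₁₂ := ((iNT hI x).naturality S.f).symm
  comm₂₃ := ((iNT hI x).naturality S.g).symm

variable {hI}

lemma VPolAux.of_iso : ∀ {n : ℕ} {F G : C ⥤ A}, VPolAux hI n F → (F ≅ G) → VPolAux hI n G
  | 0, _, _, h, e => IsZero.of_iso h e.symm
  | _ + 1, _, _, h, e => fun x =>
      ⟨(h x).1.of_iso ((kappaF hI x).mapIso e.symm), (h x).2.of_iso ((deltaF hI x).mapIso e)⟩

lemma vPolAt_iff_isZero_kappaF {n : ℕ} {x : C} {F : C ⥤ A} :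
    VPolAt hI n x F ↔ IsZero ((kappaF hI x).obj F) ∧ VPolAux hI n ((deltaF hI x).obj F) := by
  rw [VPolAt, Preadditive.mono_iff_isZero_kernel]
  exact and_congr (Iso.isZero_iff (kappaFObjIso hI x F)).symm
    ⟨fun h => h.of_iso (deltaFObjIso hI x F).symm, fun h => h.of_iso (deltaFObjIso hI x F)⟩

lemma vPolAux_succ_iff {n : ℕ} {F : C ⥤ A} : VPolAux hI (n + 1) F ↔ ∀ x, VPolAt hI n x F :=
  forall_congr' fun _ => vPolAt_iff_isZero_kappaF.symm

variable (hI) in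
lemma vPolAux_of_isZero : ∀ (n : ℕ) {F : C ⥤ A}, IsZero F → VPolAux hI n F
  | 0, _, h => h
  | n + 1, F, h => vPolAux_succ_iff.2 fun x =>
      have hτ : IsZero (tensorLeft x ⋙ F) :=
        ((Functor.whiskeringLeft C C A).obj (tensorLeft x)).map_isZero h
      have := hτ.epi (iApp hI x F)
      ⟨h.mono _, vPolAux_of_isZero n (isZero_cokernel_of_epi _)⟩

lemma vPol_natCast {n : ℕ} {F : C ⥤ A} : VPol hI n F ↔ VPolAux hI (n + 1) F := Iff.rfl

lemma vPol_natCast_sub_one {n : ℕ} {F : C ⥤ A} : VPol hI (n - 1) F ↔ VPolAux hI n F := by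
  simp [VPol]

variable (hI) in
lemma vPolAt_unit (n : ℕ) (F : C ⥤ A) : VPolAt hI n (𝟙_ C) F :=
  ⟨inferInstance, vPolAux_of_isZero hI n (isZero_cokernel_of_epi _)⟩

lemma VPolAt.of_iso {n : ℕ} {x y : C} {F : C ⥤ A} (h : VPolAt hI n x F) (e : x ≅ y) :
    VPolAt hI n y F := by
  obtain ⟨_, hδ⟩ := h
  simp only [VPolAt, ← iApp_comp_isoWhiskerRight_mapIso hI e]
  exact ⟨mono_comp _ _, hδ.of_iso (cokernelCompIsIso _ _).symm⟩

lemma vPolAux_of_shortExact : ∀ (n : ℕ) {S : ShortComplex (C ⥤ A)}, S.ShortExact →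
    VPolAux hI n S.X₁ → VPolAux hI n S.X₃ → VPolAux hI n S.X₂
  | 0, _, hS, h₁, h₃ => hS.exact.isZero_X₂ (h₁.eq_of_src _ _) (h₃.eq_of_tgt _ _)
  | n + 1, S, hS, h₁, h₃ => vPolAux_succ_iff.2 fun x => by
    obtain ⟨_, hδ₁⟩ := vPolAux_succ_iff.1 h₁ x
    obtain ⟨_, hδ₃⟩ := vPolAux_succ_iff.1 h₃ x
    let φ := iShortComplexHom hI x S
    have hS' := hS.map_of_exact ((Functor.whiskeringLeft C C A).obj (tensorLeft x))
    have := hS.mono_f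
    have := hS'.mono_f
    have : Mono φ.τ₁ := ‹Mono (iApp hI x S.X₁)›
    have : Mono φ.τ₃ := ‹Mono (iApp hI x S.X₃)›
    have hK := ShortComplex.shortExact_cokernel_of_mono_τ₃ φ hS hS'
    refine ⟨ShortComplex.mono_τ₂_of_exact_of_mono φ hS.exact, ?_⟩
    exact (vPolAux_of_shortExact n hK (hδ₁.of_iso (PreservesCokernel.iso ShortComplex.π₁ φ).symm)
      (hδ₃.of_iso (PreservesCokernel.iso ShortComplex.π₃ φ).symm)).of_iso
      (PreservesCokernel.iso ShortComplex.π₂ φ)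

lemma VPolAt.tensorObj {n : ℕ} {x y : C} {F : C ⥤ A} (hx : VPolAt hI n x F)
    (hy : VPolAt hI n y (tensorLeft x ⋙ F)) : VPolAt hI n (x ⊗ y) F := by
  obtain ⟨_, hδx⟩ := hx
  obtain ⟨_, hδy⟩ := hy
  simp only [VPolAt, iApp_tensorObj]
  exact ⟨mono_comp _ _, vPolAux_of_shortExact n
    (ShortComplex.shortExact_cokernel_comp (iApp hI x F)
      (iApp hI y (tensorLeft x ⋙ F) ≫ (Functor.isoWhiskerRight (tensorLeftTensor x y) F).inv))
    hδx (hδy.of_iso (cokernelCompIsIso _ _).symm)⟩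

end VeryStrongPolynomial

section Braided

variable [BraidedCategory C] {hI : IsInitial (𝟙_ C)}

lemma VPolAt.tensorLeft_comp {n : ℕ} {x z : C} {F : C ⥤ A}
    (hz : ∀ G : C ⥤ A, VPolAux hI n G → VPolAux hI n (tensorLeft z ⋙ G))
    (h : VPolAt hI n x F) : VPolAt hI n x (tensorLeft z ⋙ F) := by
  obtain ⟨_, hδ⟩ := h
  let W := (Functor.whiskeringLeft C C A).obj (tensorLeft z)
  have hW : iApp hI x (tensorLeft z ⋙ F) =
      W.map (iApp hI x F) ≫ (Functor.isoWhiskerRight (tensorLeftCommIso x z) F).inv := by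
    rw [Iso.eq_comp_inv, iApp_tensorLeft_comp]
    rfl
  simp only [VPolAt, hW]
  exact ⟨mono_comp _ _, (hz _ hδ).of_iso
    (PreservesCokernel.iso W (iApp hI x F) ≪≫ (cokernelCompIsIso _ _).symm)⟩

lemma VPolAux.tensorLeft_comp : ∀ {n : ℕ} {F : C ⥤ A} (z : C),
    VPolAux hI n F → VPolAux hI n (tensorLeft z ⋙ F)
  | 0, _, z, h => ((Functor.whiskeringLeft C C A).obj (tensorLeft z)).map_isZero h
  | _ + 1, _, z, h => vPolAux_succ_iff.2 fun x =>
      (vPolAux_succ_iff.1 h x).tensorLeft_comp fun _ hG => hG.tensorLeft_comp z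

lemma vPolAt_tensorList {n : ℕ} : ∀ (l : List C) {F : C ⥤ A},
    (∀ e ∈ l, VPolAt hI n e F) → VPolAt hI n (tensorList l) F
  | [], F, _ => vPolAt_unit hI n F
  | e :: l, _, h => (h e List.mem_cons_self).tensorObj <| vPolAt_tensorList l fun e' he' =>
      (h e' (List.mem_cons_of_mem e he')).tensorLeft_comp fun _ hG => hG.tensorLeft_comp e

end Braided

/-- If every object of `C` is isomorphic to a finite tensor product of objects in `E`,
then `F ∈ VPol_n` iff `κ_e F = 0` and `δ_e F ∈ VPol_{n-1}` for every `e ∈ E`. -/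
theorem vpol_iff_generators [BraidedCategory C] (hI : IsInitial (𝟙_ C)) (E : Set C)
    (hE : ∀ m : C, ∃ l : List C, (∀ e ∈ l, e ∈ E) ∧ Nonempty (m ≅ tensorList l))
    (n : ℕ) (F : C ⥤ A) :
    VPol hI n F ↔ ∀ e ∈ E,
      IsZero ((kappaF hI e).obj F) ∧ VPol hI ((n : ℤ) - 1) ((deltaF hI e).obj F) := by
  simp only [vPol_natCast, vPol_natCast_sub_one, vPolAux_succ_iff, ← vPolAt_iff_isZero_kappaF]
  refine ⟨fun h e _ => h e, fun h x => ?_⟩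
  obtain ⟨l, hl, ⟨ex⟩⟩ := hE x
  exact (vPolAt_tensorList l fun e he => h e (hl e he)).of_iso ex.symm
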